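/- For P = diag(1,0,0) ∈ 𝔥₃(𝕆), the operator L_P(X) = P ∘ X on 𝔥₃(𝕆) has exactly the eigenvalues 0, 1/2, and 1, with eigenspaces of dimensions 10, 16, and 1 respectively. -/

import Mathlib

noncomputable section

/-- The octonions over `R`, realised via the Cayley–Dickson construction on quaternions. -/
abbrev Oct (R : Type*) [Field R] := Quaternion R × Quaternion R

variable {R : Type*} [Field R]

/-- Octonion multiplication (Cayley–Dickson). -/
def omul (x y : Oct R) : Oct R :=
  (x.1 * y.1 - star y.2 * x.2, y.2 * x.1 + x.2 * star y.1)

/-- Octonionic conjugation. -/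
def oconj (x : Oct R) : Oct R := (star x.1, -x.2)

/-- The octonion unit. -/
def oone : Oct R := ((1 : Quaternion R), 0)

/-- 3×3 matrices with octonion entries. -/
abbrev M3 (R : Type*) [Field R] := Matrix (Fin 3) (Fin 3) (Oct R)

/-- Matrix multiplication using octonion multiplication of entries. -/
def mmul (a b : M3 R) : M3 R := fun i j => ∑ k, omul (a i k) (b k j)

/-- The Jordan product `a ∘ b = (ab + ba)/2`. -/
def jmul (a b : M3 R) : M3 R := fun i j => (2⁻¹ : R) • (mmul a b i j + mmul b a i j)

/-- The identity octonionic matrix. -/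
def oI : M3 R := fun i j => if i = j then oone else 0

/-- The (octonion-valued) trace of an octonionic matrix. -/
def otr (a : M3 R) : Oct R := ∑ i, a i i

/-- The real part of an octonion. -/
def ore (x : Oct R) : R := x.1.re

lemma omul_add_left (x y z : Oct R) : omul (x + y) z = omul x z + omul y z := by
  apply Prod.ext <;> simp [omul, add_mul, mul_add] <;> abel

lemma omul_add_right (x y z : Oct R) : omul x (y + z) = omul x y + omul x z := by
  apply Prod.ext <;> simp [omul, add_mul, mul_add, star_add] <;> abel

lemma qstar_smul (c : R) (q : Quaternion R) : star (c • q) = c • star q := by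
  ext <;> simp

lemma omul_smul_left (c : R) (x y : Oct R) : omul (c • x) y = c • omul x y := by
  apply Prod.ext <;>
    simp [omul, smul_mul_assoc, mul_smul_comm, smul_sub, smul_add]

lemma omul_smul_right (c : R) (x y : Oct R) : omul x (c • y) = c • omul x y := by
  apply Prod.ext <;>
    simp [omul, qstar_smul, smul_mul_assoc, mul_smul_comm, smul_sub, smul_add]

lemma oconj_add (x y : Oct R) : oconj (x + y) = oconj x + oconj y := by
  apply Prod.ext <;> simp [oconj] <;> abel

lemma oconj_smul (c : R) (x : Oct R) : oconj (c • x) = c • oconj x := by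
  apply Prod.ext <;> simp [oconj, qstar_smul]

/-- The subspace of hermitian 3×3 octonionic matrices. -/
def herm (R : Type*) [Field R] : Submodule R (M3 R) where
  carrier := {a | ∀ i j, oconj (a i j) = a j i}
  add_mem' := by
    intro a b ha hb i j
    simp only [Matrix.add_apply, oconj_add, ha i j, hb i j]
  zero_mem' := by
    intro i j
    simp [oconj, Prod.ext_iff]
  smul_mem' := by
    intro c a ha i j
    simp only [Matrix.smul_apply, oconj_smul, ha i j]

/-- The subspace of traceless octonionic matrices. -/
def tless (R : Type*) [Field R] : Submodule R (M3 R) where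
  carrier := {a | otr a = 0}
  add_mem' := by
    intro a b ha hb
    simp only [Set.mem_setOf_eq, otr, Matrix.add_apply, Finset.sum_add_distrib] at *
    simp [ha, hb]
  zero_mem' := by simp [otr]
  smul_mem' := by
    intro c a ha
    simp only [Set.mem_setOf_eq, otr, Matrix.smul_apply, ← Finset.smul_sum] at *
    simp [ha]

lemma jmul_add_right (P X Y : M3 R) : jmul P (X + Y) = jmul P X + jmul P Y := by
  funext i j
  simp only [jmul, mmul, Matrix.add_apply, omul_add_left, omul_add_right,
    Finset.sum_add_distrib, smul_add]
  module

lemma jmul_smul_right (c : R) (P X : M3 R) : jmul P (c • X) = c • jmul P X := by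
  funext i j
  simp only [jmul, mmul, Matrix.smul_apply, omul_smul_left, omul_smul_right,
    ← Finset.smul_sum, smul_add]
  rw [smul_comm c (2⁻¹:R), smul_comm c (2⁻¹:R)]

/-- Left Jordan multiplication `L_P` as a linear endomorphism. -/
def lmulJ (P : M3 R) : M3 R →ₗ[R] M3 R where
  toFun X := jmul P X
  map_add' := jmul_add_right P
  map_smul' c X := jmul_smul_right c P X

/-- The inner product `⟨a,b⟩ = tr(a∘b)/2` on real octonionic matrices. -/
def ip (a b : M3 ℝ) : ℝ := ore (otr (jmul a b)) / 2

/-- `diag(1,0,0)`. -/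
def Pdiag : M3 ℝ := fun i j => if i = 0 ∧ j = 0 then oone else 0

/-! ### Auxiliary lemmas -/

lemma omul_zero_left' (y : Oct ℝ) : omul (0 : Oct ℝ) y = 0 := by
  simp [omul, Prod.ext_iff]

lemma omul_zero_right' (x : Oct ℝ) : omul x (0 : Oct ℝ) = 0 := by
  simp [omul, Prod.ext_iff]

lemma omul_oone_left' (y : Oct ℝ) : omul oone y = y := by
  simp [omul, oone, Prod.ext_iff]

lemma omul_oone_right' (x : Oct ℝ) : omul x oone = x := by
  simp [omul, oone, Prod.ext_iff]

lemma oone_ne_zero' : (oone : Oct ℝ) ≠ 0 := by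
  simp [oone, Prod.ext_iff]

lemma oconj_oone' : oconj (oone : Oct ℝ) = oone := by
  simp [oconj, oone, Prod.ext_iff]

lemma oconj_zero' : oconj (0 : Oct ℝ) = 0 := by
  simp [oconj, Prod.ext_iff]

lemma oconj_oconj' (x : Oct ℝ) : oconj (oconj x) = x := by
  simp [oconj]

lemma half_add' (v : Oct ℝ) : (2⁻¹ : ℝ) • (v + v) = v := by
  rw [← two_smul ℝ v, smul_smul]; norm_num

lemma half_add2' (v : Oct ℝ) : (2⁻¹ : ℝ) • v + (2⁻¹ : ℝ) • v = v := by
  rw [← smul_add]; exact half_add' v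

lemma jmulP (X : M3 ℝ) : jmul Pdiag X =
    fun i j => (2⁻¹:ℝ) • ((if i = 0 then X 0 j else 0) + (if j = 0 then X i 0 else 0)) := by
  funext i j
  have h1 : mmul Pdiag X i j = if i = 0 then X 0 j else 0 := by
    by_cases hi : i = 0 <;>
      simp [mmul, Pdiag, Fin.sum_univ_three, hi, omul_zero_left', omul_oone_left']
  have h2 : mmul X Pdiag i j = if j = 0 then X i 0 else 0 := by
    by_cases hj : j = 0 <;>
      simp [mmul, Pdiag, Fin.sum_univ_three, hj, omul_zero_right', omul_oone_right']
  simp [jmul, h1, h2]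

lemma real_of_conj {x : Oct ℝ} (h : oconj x = x) : x = ore x • oone := by
  have h1 : star x.1 = x.1 := congrArg Prod.fst h
  have h2 : -x.2 = x.2 := congrArg Prod.snd h
  have hx2 : x.2 = 0 := by
    have h2' : (2:ℝ) • x.2 = 0 := by rw [two_smul]; nth_rewrite 1 [← h2]; simp
    exact (smul_eq_zero.mp h2').resolve_left (by norm_num)
  rw [Quaternion.ext_iff] at h1
  simp only [Quaternion.re_star, Quaternion.imI_star, Quaternion.imJ_star,
    Quaternion.imK_star, neg_eq_self] at h1
  apply Prod.ext
  · rw [Quaternion.ext_iff]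
    simp [ore, oone, h1.1, h1.2.1, h1.2.2, Quaternion.re_one, Quaternion.imI_one,
      Quaternion.imJ_one, Quaternion.imK_one]
  · simp [ore, oone, hx2]

lemma eig_entries {X : M3 ℝ} {c : ℝ} (hE : jmul Pdiag X = c • X) :
    X 0 0 = c • X 0 0 ∧
    (∀ j : Fin 3, j ≠ 0 → (2⁻¹:ℝ) • X 0 j = c • X 0 j) ∧
    (∀ i : Fin 3, i ≠ 0 → (2⁻¹:ℝ) • X i 0 = c • X i 0) ∧
    (∀ i j : Fin 3, i ≠ 0 → j ≠ 0 → (0 : Oct ℝ) = c • X i j) := by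
  rw [jmulP] at hE
  refine ⟨?_, ?_, ?_, ?_⟩
  · have h := congrFun (congrFun hE 0) 0
    rw [half_add'] at h
    exact h
  · intro j hj; have := congrFun (congrFun hE 0) j; simpa [hj] using this
  · intro i hi; have := congrFun (congrFun hE i) 0; simpa [hi] using this
  · intro i j hi hj; have := congrFun (congrFun hE i) j; simpa [hi, hj] using this

lemma smul_cancel {a c : ℝ} {v : Oct ℝ} (h : a • v = c • v) (hne : a ≠ c) : v = 0 := by
  have h' : (a - c) • v = 0 := by rw [sub_smul, h, sub_self]
  exact (smul_eq_zero.mp h').resolve_left (sub_ne_zero.mpr hne)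

lemma eig_forced {X : M3 ℝ} {c : ℝ} (hE : jmul Pdiag X = c • X)
    (h0 : c ≠ 0) (h2 : c ≠ 1/2) (h1 : c ≠ 1) : X = 0 := by
  obtain ⟨e00, erow, ecol, eblk⟩ := eig_entries hE
  funext i j
  show X i j = 0
  by_cases hi : i = 0 <;> by_cases hj : j = 0
  · subst hi; subst hj
    have h : (1:ℝ) • X 0 0 = c • X 0 0 := by rw [one_smul]; exact e00
    exact smul_cancel h (Ne.symm h1)
  · subst hi
    exact smul_cancel (erow j hj) (by rw [show (2⁻¹:ℝ) = 1/2 by norm_num]; exact Ne.symm h2)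
  · subst hj
    exact smul_cancel (ecol i hi) (by rw [show (2⁻¹:ℝ) = 1/2 by norm_num]; exact Ne.symm h2)
  · exact (smul_eq_zero.mp (eblk i j hi hj).symm).resolve_left h0

/-- Eigenvector for eigenvalue `1/2`. -/
def Ehalf : M3 ℝ := fun i j => if (i = 0 ∧ j = 1) ∨ (i = 1 ∧ j = 0) then oone else 0

/-- Eigenvector for eigenvalue `0`. -/
def Ezero : M3 ℝ := fun i j => if i = 1 ∧ j = 1 then oone else 0

lemma Pdiag_mem_herm : Pdiag ∈ herm ℝ := by
  intro i j
  fin_cases i <;> fin_cases j <;> simp [Pdiag, oconj_oone', oconj_zero']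

lemma Ehalf_mem_herm : Ehalf ∈ herm ℝ := by
  intro i j
  fin_cases i <;> fin_cases j <;> simp [Ehalf, oconj_oone', oconj_zero']

lemma Ezero_mem_herm : Ezero ∈ herm ℝ := by
  intro i j
  fin_cases i <;> fin_cases j <;> simp [Ezero, oconj_oone', oconj_zero']

lemma Pdiag_ne_zero : Pdiag ≠ 0 := by
  intro h
  exact oone_ne_zero' (congrFun (congrFun h 0) 0)

lemma Ehalf_ne_zero : Ehalf ≠ 0 := by
  intro h
  have := congrFun (congrFun h 0) 1
  simp [Ehalf] at this
  exact oone_ne_zero' this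

lemma Ezero_ne_zero : Ezero ≠ 0 := by
  intro h
  have := congrFun (congrFun h 1) 1
  simp [Ezero] at this
  exact oone_ne_zero' this

lemma Pdiag_eig : jmul Pdiag Pdiag = (1:ℝ) • Pdiag := by
  rw [jmulP]
  funext i j
  fin_cases i <;> fin_cases j <;> simp [Pdiag, half_add2']

lemma Ehalf_eig : jmul Pdiag Ehalf = (1/2:ℝ) • Ehalf := by
  rw [jmulP]
  funext i j
  fin_cases i <;> fin_cases j <;> simp [Ehalf, one_div]

lemma Ezero_eig : jmul Pdiag Ezero = (0:ℝ) • Ezero := by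
  rw [jmulP]
  funext i j
  fin_cases i <;> fin_cases j <;> simp [Ezero]

/-- Entry function for `f0`. -/
def g0 (v : ℝ × ℝ × Oct ℝ) : M3 ℝ := fun i j =>
  if i = 1 ∧ j = 1 then v.1 • oone
  else if i = 2 ∧ j = 2 then v.2.1 • oone
  else if i = 1 ∧ j = 2 then v.2.2
  else if i = 2 ∧ j = 1 then oconj v.2.2
  else 0

/-- Entry function for `f2`. -/
def g2 (v : Oct ℝ × Oct ℝ) : M3 ℝ := fun i j =>
  if i = 0 ∧ j = 1 then v.1
  else if i = 0 ∧ j = 2 then v.2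
  else if i = 1 ∧ j = 0 then oconj v.1
  else if i = 2 ∧ j = 0 then oconj v.2
  else 0

/-- Parametrisation of the `0`-eigenspace inside `herm`. -/
def f0 : (ℝ × ℝ × Oct ℝ) →ₗ[ℝ] M3 ℝ where
  toFun := g0
  map_add' x y := by
    funext i j
    simp only [g0, Matrix.add_apply]
    split_ifs <;> simp [add_smul, oconj_add]
  map_smul' c x := by
    funext i j
    simp only [g0, Matrix.smul_apply, RingHom.id_apply]
    split_ifs <;> simp [mul_smul, oconj_smul]

/-- Parametrisation of the `1/2`-eigenspace inside `herm`. -/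
def f2 : (Oct ℝ × Oct ℝ) →ₗ[ℝ] M3 ℝ where
  toFun := g2
  map_add' x y := by
    funext i j
    simp only [g2, Matrix.add_apply]
    split_ifs <;> simp [oconj_add]
  map_smul' c x := by
    funext i j
    simp only [g2, Matrix.smul_apply, RingHom.id_apply]
    split_ifs <;> simp [oconj_smul]

lemma f0_apply (v : ℝ × ℝ × Oct ℝ) : f0 v = g0 v := rfl

lemma f2_apply (v : Oct ℝ × Oct ℝ) : f2 v = g2 v := rfl

lemma f0_inj : Function.Injective f0 := by
  rw [← LinearMap.ker_eq_bot, LinearMap.ker_eq_bot']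
  intro v hv
  have h11 := congrFun (congrFun hv 1) 1
  have h22 := congrFun (congrFun hv 2) 2
  have h12 := congrFun (congrFun hv 1) 2
  simp only [f0_apply, g0, LinearMap.coe_mk, AddHom.coe_mk] at h11 h22 h12
  simp [smul_eq_zero, oone_ne_zero'] at h11 h22 h12
  exact Prod.ext h11 (Prod.ext h22 h12)

lemma f2_inj : Function.Injective f2 := by
  rw [← LinearMap.ker_eq_bot, LinearMap.ker_eq_bot']
  intro v hv
  have h01 := congrFun (congrFun hv 0) 1
  have h02 := congrFun (congrFun hv 0) 2
  simp only [f2_apply, g2, LinearMap.coe_mk, AddHom.coe_mk] at h01 h02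
  simp at h01 h02
  exact Prod.ext h01 h02

lemma mem_herm_iff {X : M3 ℝ} : X ∈ herm ℝ ↔ ∀ i j, oconj (X i j) = X j i := Iff.rfl

lemma mem_eig_iff {X : M3 ℝ} {c : ℝ} :
    X ∈ Module.End.eigenspace (lmulJ Pdiag) c ↔ jmul Pdiag X = c • X := by
  rw [Module.End.mem_eigenspace_iff]; exact Iff.rfl

lemma half_ne_zero_smul {v : Oct ℝ} (h : (2⁻¹:ℝ) • v = (0:ℝ) • v) : v = 0 :=
  smul_cancel h (by norm_num)

lemma range_f0 : LinearMap.range f0 = herm ℝ ⊓ Module.End.eigenspace (lmulJ Pdiag) 0 := by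
  apply le_antisymm
  · rintro X ⟨v, rfl⟩
    rw [Submodule.mem_inf]
    constructor
    · rw [mem_herm_iff]
      intro i j
      fin_cases i <;> fin_cases j <;>
        simp [f0_apply, g0, oconj_zero', oconj_oconj', oconj_smul, oconj_oone']
    · rw [mem_eig_iff, jmulP]
      funext i j
      fin_cases i <;> fin_cases j <;> simp [f0_apply, g0]
  · intro X hX
    rw [Submodule.mem_inf, mem_herm_iff, mem_eig_iff] at hX
    obtain ⟨hh, he⟩ := hX
    obtain ⟨e00, erow, ecol, _⟩ := eig_entries he
    have h00 : X 0 0 = 0 := by simpa using e00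
    have h01 : X 0 1 = 0 := half_ne_zero_smul (erow 1 (by decide))
    have h02 : X 0 2 = 0 := half_ne_zero_smul (erow 2 (by decide))
    have h10 : X 1 0 = 0 := half_ne_zero_smul (ecol 1 (by decide))
    have h20 : X 2 0 = 0 := half_ne_zero_smul (ecol 2 (by decide))
    have hd1 : X 1 1 = ore (X 1 1) • oone := real_of_conj (hh 1 1)
    have hd2 : X 2 2 = ore (X 2 2) • oone := real_of_conj (hh 2 2)
    have h21 : X 2 1 = oconj (X 1 2) := (hh 1 2).symm
    refine ⟨(ore (X 1 1), ore (X 2 2), X 1 2), ?_⟩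
    funext i j
    fin_cases i <;> fin_cases j <;>
      simp [f0_apply, g0, h00, h01, h02, h10, h20, h21, ← hd1, ← hd2]

lemma range_f2 : LinearMap.range f2 = herm ℝ ⊓ Module.End.eigenspace (lmulJ Pdiag) (1/2) := by
  apply le_antisymm
  · rintro X ⟨v, rfl⟩
    rw [Submodule.mem_inf]
    constructor
    · rw [mem_herm_iff]
      intro i j
      fin_cases i <;> fin_cases j <;>
        simp [f2_apply, g2, oconj_zero', oconj_oconj']
    · rw [mem_eig_iff, jmulP]
      funext i j
      fin_cases i <;> fin_cases j <;> simp [f2_apply, g2, one_div]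
  · intro X hX
    rw [Submodule.mem_inf, mem_herm_iff, mem_eig_iff] at hX
    obtain ⟨hh, he⟩ := hX
    obtain ⟨e00, _, _, eblk⟩ := eig_entries he
    have h00 : X 0 0 = 0 := by
      refine smul_cancel (a := 1) (c := 1/2) ?_ (by norm_num)
      rw [one_smul]; exact e00
    have hblk : ∀ i j : Fin 3, i ≠ 0 → j ≠ 0 → X i j = 0 := by
      intro i j hi hj
      have := (eblk i j hi hj).symm
      rcases smul_eq_zero.mp this with h | h
      · norm_num at h
      · exact h
    have h11 := hblk 1 1 (by decide) (by decide)
    have h12 := hblk 1 2 (by decide) (by decide)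
    have h21 := hblk 2 1 (by decide) (by decide)
    have h22 := hblk 2 2 (by decide) (by decide)
    have hc1 : X 1 0 = oconj (X 0 1) := (hh 0 1).symm
    have hc2 : X 2 0 = oconj (X 0 2) := (hh 0 2).symm
    refine ⟨(X 0 1, X 0 2), ?_⟩
    funext i j
    fin_cases i <;> fin_cases j <;>
      simp [f2_apply, g2, h00, h11, h12, h21, h22, hc1, hc2]

lemma S1_eq : herm ℝ ⊓ Module.End.eigenspace (lmulJ Pdiag) 1 = Submodule.span ℝ {Pdiag} := by
  apply le_antisymm
  · intro X hX
    rw [Submodule.mem_inf, mem_herm_iff, mem_eig_iff] at hX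
    obtain ⟨hh, he⟩ := hX
    obtain ⟨_, erow, ecol, eblk⟩ := eig_entries he
    have hrow : ∀ j : Fin 3, j ≠ 0 → X 0 j = 0 := fun j hj =>
      smul_cancel (erow j hj) (by norm_num)
    have hcol : ∀ i : Fin 3, i ≠ 0 → X i 0 = 0 := fun i hi =>
      smul_cancel (ecol i hi) (by norm_num)
    have hblk : ∀ i j : Fin 3, i ≠ 0 → j ≠ 0 → X i j = 0 := by
      intro i j hi hj
      have := (eblk i j hi hj).symm
      rcases smul_eq_zero.mp this with h | h
      · norm_num at h
      · exact h
    have hd : X 0 0 = ore (X 0 0) • oone := real_of_conj (hh 0 0)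
    rw [Submodule.mem_span_singleton]
    refine ⟨ore (X 0 0), ?_⟩
    funext i j
    fin_cases i <;> fin_cases j <;>
      simp [Pdiag, hrow, hcol,
        hrow 1 (by decide), hrow 2 (by decide), hcol 1 (by decide), hcol 2 (by decide),
        hblk 1 1 (by decide) (by decide), hblk 1 2 (by decide) (by decide),
        hblk 2 1 (by decide) (by decide), hblk 2 2 (by decide) (by decide), ← hd]
  · rw [Submodule.span_singleton_le_iff_mem, Submodule.mem_inf]
    exact ⟨Pdiag_mem_herm, mem_eig_iff.mpr Pdiag_eig⟩
/-- for `P = diag(1,0,0)`, `L_P` on `𝔥₃(𝕆)` has exactly the eigenvalues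
`0, 1/2, 1` with eigenspaces of dimensions `10, 16, 1`. -/
theorem eigenvalues_of_LP :
    (∀ c : ℝ, (∃ X ∈ herm ℝ, X ≠ 0 ∧ jmul Pdiag X = c • X) ↔ (c = 0 ∨ c = 1/2 ∨ c = 1)) ∧
    Module.finrank ℝ ↥(herm ℝ ⊓ Module.End.eigenspace (lmulJ Pdiag) 0) = 10 ∧
    Module.finrank ℝ ↥(herm ℝ ⊓ Module.End.eigenspace (lmulJ Pdiag) (1/2)) = 16 ∧
    Module.finrank ℝ ↥(herm ℝ ⊓ Module.End.eigenspace (lmulJ Pdiag) 1) = 1 := by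
  refine ⟨?_, ?_, ?_, ?_⟩
  · intro c
    constructor
    · rintro ⟨X, hXh, hXne, hXeig⟩
      by_contra hc
      push_neg at hc
      obtain ⟨c0, c2, c1⟩ := hc
      exact hXne (eig_forced hXeig c0 c2 c1)
    · rintro (rfl | rfl | rfl)
      · exact ⟨Ezero, Ezero_mem_herm, Ezero_ne_zero, Ezero_eig⟩
      · exact ⟨Ehalf, Ehalf_mem_herm, Ehalf_ne_zero, Ehalf_eig⟩
      · exact ⟨Pdiag, Pdiag_mem_herm, Pdiag_ne_zero, Pdiag_eig⟩
  · rw [← range_f0, ← (LinearEquiv.ofInjective f0 f0_inj).finrank_eq]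
    simp [Module.finrank_prod, Quaternion.finrank_eq_four]
  · rw [← range_f2, ← (LinearEquiv.ofInjective f2 f2_inj).finrank_eq]
    simp [Module.finrank_prod, Quaternion.finrank_eq_four]
  · rw [S1_eq]
    exact finrank_span_singleton Pdiag_ne_zero
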